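/- arXiv:1101.4090 — 4 statements merged into one kernel-verified Lean document; each statement's English description precedes it below -/
import Mathlib

section
/- Gauss' theorem for dynamical systems: for all ψ ∈ C_b^1(Ω) and φ ∈ C_b^1(Ω)^n, ∫_Ω ψ ∂_{ω,i} φ_i dμ = −∫_Ω (∂_{ω,i} ψ) φ_i dμ for each i, i.e. ∫_Ω ψ div_ω φ dμ = −∫_Ω ∇_ω ψ · φ dμ. -/
/-!
Along the coordinate flow `t ↦ τ (t • eᵢ)` the integral of `ψ φᵢ` is constant, since `μ` is
invariant. Differentiating under the integral sign (the derivatives are bounded) and using the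
product rule gives `∫ (∂ᵢψ φᵢ + ψ ∂ᵢφᵢ) dμ = 0`.
-/

open MeasureTheory Function

lemma exists_abs_le_mul {α : Type*} {f g : α → ℝ} (hf : ∃ C, ∀ x, |f x| ≤ C)
    (hg : ∃ C, ∀ x, |g x| ≤ C) : ∃ C, ∀ x, |f x * g x| ≤ C := by
  obtain ⟨A, hA⟩ := hf
  obtain ⟨B, hB⟩ := hg
  exact ⟨A * B, fun x => abs_mul (f x) (g x) ▸
    mul_le_mul (hA x) (hB x) (abs_nonneg _) ((abs_nonneg _).trans (hA x))⟩

lemma exists_abs_le_add {α : Type*} {f g : α → ℝ} (hf : ∃ C, ∀ x, |f x| ≤ C)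
    (hg : ∃ C, ∀ x, |g x| ≤ C) : ∃ C, ∀ x, |f x + g x| ≤ C := by
  obtain ⟨A, hA⟩ := hf
  obtain ⟨B, hB⟩ := hg
  exact ⟨A + B, fun x => (abs_add_le _ _).trans (add_le_add (hA x) (hB x))⟩

lemma Continuous.integrable_of_exists_abs_le {Ω : Type*} [TopologicalSpace Ω]
    [MeasurableSpace Ω] [OpensMeasurableSpace Ω] {μ : Measure Ω} [IsFiniteMeasure μ]
    {f : Ω → ℝ} (hf : Continuous f) (hb : ∃ C, ∀ ω, |f ω| ≤ C) : Integrable f μ :=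
  let ⟨C, hC⟩ := hb
  .of_bound hf.aestronglyMeasurable C (ae_of_all _ hC)

section Flow

variable {Ω : Type*} {σ : ℝ → Ω → Ω} {f f' : Ω → ℝ}

lemma hasDerivAt_comp_flow (hadd : ∀ s t ω, σ (s + t) ω = σ s (σ t ω))
    (hderiv : ∀ ω, HasDerivAt (fun t => f (σ t ω)) (f' ω) 0) (h : ℝ) (ω : Ω) :
    HasDerivAt (fun t => f (σ t ω)) (f' (σ h ω)) h := by
  have hshift := HasDerivAt.comp_sub_const h h (by rw [sub_self]; exact hderiv (σ h ω))
  simpa only [← hadd, sub_add_cancel] using hshift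

variable [MeasurableSpace Ω] {μ : Measure Ω}

lemma MeasureTheory.MeasurePreserving.integral_comp_of_aestronglyMeasurable {g : Ω → Ω}
    (hg : MeasurePreserving g μ μ) (hf : AEStronglyMeasurable f μ) :
    ∫ ω, f (g ω) ∂μ = ∫ ω, f ω ∂μ := by
  rw [← integral_map hg.measurable.aemeasurable (hg.map_eq.symm ▸ hf), hg.map_eq]

-- Differentiating at `t = 0` yields `∫ f' ∘ σ 0`, which is `∫ f'` by invariance even though
-- `σ 0` need not be the identity.
theorem integral_eq_zero_of_hasDerivAt_flow [IsFiniteMeasure μ]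
    (hadd : ∀ s t ω, σ (s + t) ω = σ s (σ t ω)) (hσ : ∀ t, MeasurePreserving (σ t) μ μ)
    (hf : Integrable f μ) (hf' : AEStronglyMeasurable f' μ) {C : ℝ} (hf'C : ∀ ω, |f' ω| ≤ C)
    (hderiv : ∀ ω, HasDerivAt (fun t => f (σ t ω)) (f' ω) 0) :
    ∫ ω, f' ω ∂μ = 0 := by
  obtain ⟨-, hdiff⟩ := hasDerivAt_integral_of_dominated_loc_of_deriv_le (μ := μ) (x₀ := 0)
    (F := fun t ω => f (σ t ω)) (F' := fun t ω => f' (σ t ω)) (bound := fun _ => C)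
    Filter.univ_mem
    (Filter.Eventually.of_forall fun t => hf.aestronglyMeasurable.comp_measurePreserving (hσ t))
    ((hσ 0).integrable_comp_of_integrable hf) (hf'.comp_measurePreserving (hσ 0))
    (ae_of_all _ fun ω t _ => hf'C (σ t ω)) (integrable_const C)
    (ae_of_all _ fun ω t _ => hasDerivAt_comp_flow hadd hderiv t ω)
  have hconst : HasDerivAt (fun t => ∫ ω, f (σ t ω) ∂μ) 0 0 := by
    simp only [fun t => (hσ t).integral_comp_of_aestronglyMeasurable hf.aestronglyMeasurable]
    exact hasDerivAt_const _ _
  rw [← (hσ 0).integral_comp_of_aestronglyMeasurable hf', hdiff.unique hconst]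

end Flow

theorem stmt_4_general (n : ℕ) (Ω : Type*) [MetricSpace Ω] [MeasurableSpace Ω] [BorelSpace Ω]
    (μ : Measure Ω) [IsProbabilityMeasure μ]
    (τ : (Fin n → ℝ) → Ω → Ω)
    (hgrp : ∀ x y, τ x ∘ τ y = τ (x + y)) (hid : τ 0 = id)
    (hmp : ∀ x, MeasurePreserving (τ x) μ μ)
    (ψ : Ω → ℝ) (Dψ : Ω → Fin n → ℝ)
    (hψc : Continuous ψ) (hψb : ∃ C, ∀ ω, |ψ ω| ≤ C)
    (hψd : ∀ ω i, HasDerivAt (fun h : ℝ => ψ (τ (h • (Pi.single i 1 : Fin n → ℝ)) ω)) (Dψ ω i) 0)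
    (hDψc : Continuous Dψ) (hDψb : ∃ C, ∀ ω i, |Dψ ω i| ≤ C)
    (φ : Ω → Fin n → ℝ) (Dφ : Ω → Fin n → Fin n → ℝ)
    (hφc : Continuous φ) (hφb : ∃ C, ∀ ω i, |φ ω i| ≤ C)
    (hφd : ∀ ω i j, HasDerivAt (fun h : ℝ => φ (τ (h • (Pi.single i 1 : Fin n → ℝ)) ω) j) (Dφ ω i j) 0)
    (hDφc : Continuous Dφ) (hDφb : ∃ C, ∀ ω i j, |Dφ ω i j| ≤ C) :
    (∀ i, ∫ ω, ψ ω * Dφ ω i i ∂μ = - ∫ ω, Dψ ω i * φ ω i ∂μ) ∧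
    ∫ ω, ψ ω * ∑ i, Dφ ω i i ∂μ = - ∫ ω, ∑ i, Dψ ω i * φ ω i ∂μ := by
  have hφib i : ∃ C, ∀ ω, |φ ω i| ≤ C := hφb.imp fun _ hC ω => hC ω i
  have hDψib i : ∃ C, ∀ ω, |Dψ ω i| ≤ C := hDψb.imp fun _ hC ω => hC ω i
  have hDφib i : ∃ C, ∀ ω, |Dφ ω i i| ≤ C := hDφb.imp fun _ hC ω => hC ω i i
  have hint₁ i : Integrable (fun ω => Dψ ω i * φ ω i) μ :=
    ((continuous_apply i).comp hDψc).mul ((continuous_apply i).comp hφc)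
      |>.integrable_of_exists_abs_le (exists_abs_le_mul (hDψib i) (hφib i))
  have hint₂ i : Integrable (fun ω => ψ ω * Dφ ω i i) μ :=
    hψc.mul ((continuous_apply i).comp ((continuous_apply i).comp hDφc))
      |>.integrable_of_exists_abs_le (exists_abs_le_mul hψb (hDφib i))
  have hgauss i : ∫ ω, ψ ω * Dφ ω i i ∂μ = - ∫ ω, Dψ ω i * φ ω i ∂μ := by
    obtain ⟨C, hC⟩ := exists_abs_le_add (exists_abs_le_mul (hDψib i) (hφib i))
      (exists_abs_le_mul hψb (hDφib i))
    have hzero := integral_eq_zero_of_hasDerivAt_flow (σ := fun t => τ (t • Pi.single i 1))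
      (f := fun ω => ψ ω * φ ω i) (f' := fun ω => Dψ ω i * φ ω i + ψ ω * Dφ ω i i)
      (fun s t ω => by simp only [add_smul, ← hgrp, comp_apply]) (fun t => hmp _)
      (hψc.mul ((continuous_apply i).comp hφc) |>.integrable_of_exists_abs_le
        (exists_abs_le_mul hψb (hφib i)))
      ((hint₁ i).add (hint₂ i)).aestronglyMeasurable hC
      fun ω => by
        have hprod := (hψd ω i).mul (hφd ω i i)
        simp only [zero_smul, hid, id_eq] at hprod
        exact hprod
    rw [integral_add (hint₁ i) (hint₂ i)] at hzero
    linarith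
  refine ⟨hgauss, ?_⟩
  simp only [Finset.mul_sum]
  rw [integral_finsetSum _ fun i _ => hint₂ i, integral_finsetSum _ fun i _ => hint₁ i,
    ← Finset.sum_neg_distrib]
  exact Finset.sum_congr rfl fun i _ => hgauss i

/-- Gauss' theorem for dynamical systems: ∫ ψ ∂ᵢφᵢ dμ = −∫ (∂ᵢψ) φᵢ dμ, and the
divergence form ∫ ψ div_ω φ dμ = −∫ ∇_ω ψ · φ dμ. -/
theorem stmt_4 (n : ℕ) (Ω : Type*) [MetricSpace Ω] [MeasurableSpace Ω] [BorelSpace Ω]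
    (μ : Measure Ω) [IsProbabilityMeasure μ]
    (τ : (Fin n → ℝ) → Ω → Ω)
    (hgrp : ∀ x y, τ x ∘ τ y = τ (x + y)) (hid : τ 0 = id)
    (hcont : Continuous fun p : (Fin n → ℝ) × Ω => τ p.1 p.2)
    (hmp : ∀ x, MeasurePreserving (τ x) μ μ)
    (herg : ∀ f : Ω → ℝ, Measurable f →
      (∀ x, ∀ᵐ ω ∂μ, f (τ x ω) = f ω) → ∃ c : ℝ, ∀ᵐ ω ∂μ, f ω = c)
    (ψ : Ω → ℝ) (Dψ : Ω → Fin n → ℝ)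
    (hψc : Continuous ψ) (hψb : ∃ C, ∀ ω, |ψ ω| ≤ C)
    (hψd : ∀ ω i, HasDerivAt (fun h : ℝ => ψ (τ (h • (Pi.single i 1 : Fin n → ℝ)) ω)) (Dψ ω i) 0)
    (hDψc : Continuous Dψ) (hDψb : ∃ C, ∀ ω i, |Dψ ω i| ≤ C)
    (φ : Ω → Fin n → ℝ) (Dφ : Ω → Fin n → Fin n → ℝ)
    (hφc : Continuous φ) (hφb : ∃ C, ∀ ω i, |φ ω i| ≤ C)
    (hφd : ∀ ω i j, HasDerivAt (fun h : ℝ => φ (τ (h • (Pi.single i 1 : Fin n → ℝ)) ω) j) (Dφ ω i j) 0)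
    (hDφc : Continuous Dφ) (hDφb : ∃ C, ∀ ω i j, |Dφ ω i j| ≤ C) :
    (∀ i, ∫ ω, ψ ω * Dφ ω i i ∂μ = - ∫ ω, Dψ ω i * φ ω i ∂μ) ∧
    ∫ ω, ψ ω * ∑ i, Dφ ω i i ∂μ = - ∫ ω, ∑ i, Dψ ω i * φ ω i ∂μ :=
  stmt_4_general n Ω μ τ hgrp hid hmp ψ Dψ hψc hψb hψd hDψc hDψb φ Dφ hφc hφb hφd hDφc hDφb
end

section
/- For the homogenized diffusion matrix D^hom with entries D^hom_{ij} = ∫_Ω (e_i · D ∇_ω φ_j + D_{ij}) dμ, where φ_j solves the cell problem div_ω(D ∇_ω φ_j) = −div_ω(D e_j) weakly, D^hom is symmetric: D^hom_{ij} = D^hom_{ji}; equivalently D^hom_{ij} = ∫_Ω (e_i + ∇_ω φ_i) · D (e_j + ∇_ω φ_j) dμ. -/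
open MeasureTheory Matrix

/-!
Testing the cell problem with `∇φ_i` shows that `∫ ∇φ_i ⬝ D (e_j + ∇φ_j)` vanishes, so adding it
to `D^hom_ij` gives the energy form `∫ (e_i + ∇φ_i) ⬝ D (e_j + ∇φ_j)`, which is symmetric in
`i, j` because `D` is.
-/

theorem Matrix.IsSymm.dotProduct_mulVec_comm {ι R : Type*} [Fintype ι] [CommSemiring R]
    {A : Matrix ι ι R} (hA : A.IsSymm) (v w : ι → R) :
    v ⬝ᵥ (A *ᵥ w) = w ⬝ᵥ (A *ᵥ v) := by
  rw [dotProduct_mulVec, dotProduct_comm, ← mulVec_transpose, hA.eq]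

theorem integrable_dotProduct_mulVec {ι Ω : Type*} [Fintype ι] [MeasurableSpace Ω]
    {μ : Measure Ω} {D : Ω → Matrix ι ι ℝ} (hDmeas : ∀ a b, Measurable fun ω => D ω a b)
    {C : ℝ} (hDbdd : ∀ ω a b, |D ω a b| ≤ C) {v w : Ω → ι → ℝ}
    (hv : MemLp v 2 μ) (hw : MemLp w 2 μ) :
    Integrable (fun ω => v ω ⬝ᵥ (D ω *ᵥ w ω)) μ := by
  have hexpand : (fun ω => v ω ⬝ᵥ (D ω *ᵥ w ω))
      = fun ω => ∑ a, ∑ b, D ω a b * (v ω a * w ω b) := by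
    funext ω
    simp only [dotProduct, mulVec, Finset.mul_sum]
    exact Finset.sum_congr rfl fun a _ => Finset.sum_congr rfl fun b _ => by ring
  rw [hexpand]
  refine integrable_finsetSum _ fun a _ => integrable_finsetSum _ fun b _ => ?_
  exact ((hv.eval a).integrable_mul (hw.eval b)).bdd_mul (hDmeas a b).aestronglyMeasurable
    (ae_of_all _ fun ω => hDbdd ω a b)

theorem stmt_13_general (n : ℕ) (Ω : Type*) [MeasurableSpace Ω]
    (μ : Measure Ω) [IsProbabilityMeasure μ]
    (D : Ω → Matrix (Fin n) (Fin n) ℝ)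
    (hDmeas : ∀ i j, Measurable fun ω => D ω i j)
    (hDbdd : ∃ C, ∀ ω i j, |D ω i j| ≤ C)
    (hDsymm : ∀ ω, (D ω).IsSymm)
    (gradφ : Fin n → Ω → Fin n → ℝ)
    (hgL2 : ∀ j, MemLp (gradφ j) 2 μ)
    -- weak cell problem tested with ∇_ω φ_i :
    (hcell : ∀ i j, ∫ ω, gradφ i ω ⬝ᵥ ((D ω) *ᵥ (gradφ j ω + (Pi.single j 1 : Fin n → ℝ))) ∂μ = 0)
    (Dhom : Matrix (Fin n) (Fin n) ℝ)
    (hDhom : ∀ i j, Dhom i j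
      = ∫ ω, (Pi.single i 1 : Fin n → ℝ) ⬝ᵥ ((D ω) *ᵥ (gradφ j ω + (Pi.single j 1 : Fin n → ℝ))) ∂μ) :
    (∀ i j, Dhom i j = Dhom j i) ∧
    (∀ i j, Dhom i j
      = ∫ ω, ((Pi.single i 1 : Fin n → ℝ) + gradφ i ω) ⬝ᵥ
          ((D ω) *ᵥ ((Pi.single j 1 : Fin n → ℝ) + gradφ j ω)) ∂μ) := by
  obtain ⟨C, hC⟩ := hDbdd
  set e : Fin n → Fin n → ℝ := fun i => Pi.single i 1
  have hintegrable {v w : Ω → Fin n → ℝ} (hv : MemLp v 2 μ) (hw : MemLp w 2 μ) :=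
    integrable_dotProduct_mulVec hDmeas hC hv hw
  have hcorrector j : MemLp (fun ω => gradφ j ω + e j) 2 μ := (hgL2 j).add (memLp_const _)
  have henergy i j : Dhom i j = ∫ ω, (e i + gradφ i ω) ⬝ᵥ (D ω *ᵥ (e j + gradφ j ω)) ∂μ := by
    simp_rw [add_dotProduct, add_comm (e j)]
    rw [integral_add (hintegrable (memLp_const _) (hcorrector j))
      (hintegrable (hgL2 i) (hcorrector j)), hcell, add_zero, hDhom]
  refine ⟨fun i j => ?_, henergy⟩
  simp only [henergy, (hDsymm _).dotProduct_mulVec_comm (e i + _)]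

/-- Symmetry of the homogenized diffusion matrix D^hom, and its energy-form representation. -/
theorem stmt_13 (n : ℕ) (Ω : Type*) [MeasurableSpace Ω]
    (μ : Measure Ω) [IsProbabilityMeasure μ]
    (D : Ω → Matrix (Fin n) (Fin n) ℝ)
    (hDmeas : ∀ i j, Measurable fun ω => D ω i j)
    (hDbdd : ∃ C, ∀ ω i j, |D ω i j| ≤ C)
    (hDsymm : ∀ ω, (D ω).IsSymm)
    (c : ℝ) (hc : 0 < c)
    (hDell : ∀ (ω : Ω) (η : Fin n → ℝ), c * ∑ k, η k ^ 2 ≤ η ⬝ᵥ ((D ω) *ᵥ η))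
    (gradφ : Fin n → Ω → Fin n → ℝ)
    (hgmeas : ∀ j, Measurable (gradφ j))
    (hgL2 : ∀ j, MemLp (gradφ j) 2 μ)
    -- weak cell problem tested with ∇_ω φ_i :
    (hcell : ∀ i j, ∫ ω, gradφ i ω ⬝ᵥ ((D ω) *ᵥ (gradφ j ω + (Pi.single j 1 : Fin n → ℝ))) ∂μ = 0)
    (Dhom : Matrix (Fin n) (Fin n) ℝ)
    (hDhom : ∀ i j, Dhom i j
      = ∫ ω, (Pi.single i 1 : Fin n → ℝ) ⬝ᵥ ((D ω) *ᵥ (gradφ j ω + (Pi.single j 1 : Fin n → ℝ))) ∂μ) :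
    (∀ i j, Dhom i j = Dhom j i) ∧
    (∀ i j, Dhom i j
      = ∫ ω, ((Pi.single i 1 : Fin n → ℝ) + gradφ i ω) ⬝ᵥ
          ((D ω) *ᵥ ((Pi.single j 1 : Fin n → ℝ) + gradφ j ω)) ∂μ) :=
  stmt_13_general n Ω μ D hDmeas hDbdd hDsymm gradφ hgL2 hcell Dhom hDhom
end

section
/- The homogenized matrix D^hom is positive definite: for every ξ ∈ ℝ^n \ {0}, ξ · D^hom ξ = ∫_Ω (ξ + ∇_ω φ_ξ) · D (ξ + ∇_ω φ_ξ) dμ ≥ c |ξ|² > 0, where φ_ξ = Σ_j ξ_j φ_j and c is the ellipticity constant of D. -/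
/-!
Writing `w_j = ∇φ_j + e_j`, the field `ξ + ∇φ_ξ` is `∑ ξ_j w_j`, so its energy is
`∑ ξ_i ξ_j ∫ w_i · D w_j`; the cell problem kills the `∇φ_i` part of `w_i`, leaving
`∫ e_i · D w_j = D^hom_ij`. For the lower bound, ellipticity gives energy `≥ c ∫ |ξ + ∇φ_ξ|²`,
and by Jensen (nonnegativity of the variance) this is at least `c |∫ (ξ + ∇φ_ξ)|² = c |ξ|²`,
because stochastic gradients have mean zero.
-/

open MeasureTheory Matrix Finset

section

variable {Ω ι κ : Type*} [MeasurableSpace Ω] {μ : Measure Ω} [Fintype ι] [Fintype κ]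

lemma sq_integral_le_integral_sq [IsProbabilityMeasure μ] {f : Ω → ℝ} (hf : MemLp f 2 μ) :
    (∫ ω, f ω ∂μ) ^ 2 ≤ ∫ ω, f ω ^ 2 ∂μ := by
  have hvar := ProbabilityTheory.variance_nonneg f μ
  rwa [ProbabilityTheory.variance_eq_sub hf, sub_nonneg] at hvar

lemma sum_smul_dotProduct_mulVec_sum_smul (M : Matrix ι ι ℝ)
    (u w : κ → ι → ℝ) (x y : κ → ℝ) :
    (∑ i, x i • u i) ⬝ᵥ (M *ᵥ ∑ j, y j • w j) = ∑ i, ∑ j, x i * y j * (u i ⬝ᵥ (M *ᵥ w j)) := by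
  simp only [mulVec_sum, mulVec_smul, sum_dotProduct, dotProduct_sum, smul_dotProduct,
    dotProduct_smul, smul_eq_mul, mul_sum, mul_assoc]
  rw [sum_comm]
  exact sum_congr rfl fun i _ => sum_congr rfl fun j _ => mul_left_comm _ _ _

lemma dotProduct_mulVec_self_eq_sum (M : Matrix ι ι ℝ) (ξ : ι → ℝ) :
    ξ ⬝ᵥ (M *ᵥ ξ) = ∑ i, ∑ j, ξ i * ξ j * M i j := by
  simp only [dotProduct, mulVec, mul_sum]
  exact sum_congr rfl fun i _ => sum_congr rfl fun j _ => by ring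

lemma sum_sq_pos_of_ne_zero {ξ : ι → ℝ} (hξ : ξ ≠ 0) :
    0 < ∑ k, ξ k ^ 2 := by
  obtain ⟨k, hk⟩ := Function.ne_iff.mp hξ
  exact sum_pos' (fun k _ => sq_nonneg _) ⟨k, mem_univ k, sq_pos_of_ne_zero hk⟩

lemma integrable_dotProduct_mulVec_s14 {D : Ω → Matrix ι ι ℝ}
    (hD : ∀ i j, MemLp (fun ω => D ω i j) ⊤ μ) {a b : Ω → ι → ℝ}
    (ha : MemLp a 2 μ) (hb : MemLp b 2 μ) :
    Integrable (fun ω => a ω ⬝ᵥ (D ω *ᵥ b ω)) μ := by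
  simp only [dotProduct, mulVec, mul_sum]
  exact integrable_finsetSum _ fun i _ => integrable_finsetSum _ fun j _ =>
    (ha.eval i).integrable_mul ((hb.eval j).mul (r := 2) (hD i j))

lemma integral_sum_smul_dotProduct_mulVec_sum_smul
    {D : Ω → Matrix ι ι ℝ} (hD : ∀ i j, MemLp (fun ω => D ω i j) ⊤ μ)
    {u w : κ → Ω → ι → ℝ} (hu : ∀ i, MemLp (u i) 2 μ) (hw : ∀ j, MemLp (w j) 2 μ)
    (x y : κ → ℝ) :
    ∫ ω, (∑ i, x i • u i ω) ⬝ᵥ (D ω *ᵥ ∑ j, y j • w j ω) ∂μ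
      = ∑ i, ∑ j, x i * y j * ∫ ω, u i ω ⬝ᵥ (D ω *ᵥ w j ω) ∂μ := by
  have hint i j := (integrable_dotProduct_mulVec_s14 hD (hu i) (hw j)).const_mul (x i * y j)
  simp only [sum_smul_dotProduct_mulVec_sum_smul]
  rw [integral_finsetSum _ fun i _ => integrable_finsetSum _ fun j _ => hint i j]
  refine sum_congr rfl fun i _ => ?_
  rw [integral_finsetSum _ fun j _ => hint i j]
  simp only [integral_const_mul]

lemma mul_sum_sq_integral_le_integral_dotProduct_mulVec [IsProbabilityMeasure μ]
    {D : Ω → Matrix ι ι ℝ} (hD : ∀ i j, MemLp (fun ω => D ω i j) ⊤ μ) {c : ℝ} (hc : 0 ≤ c)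
    (hell : ∀ᵐ ω ∂μ, ∀ η : ι → ℝ, c * ∑ k, η k ^ 2 ≤ η ⬝ᵥ (D ω *ᵥ η))
    {v : Ω → ι → ℝ} (hv : MemLp v 2 μ) :
    c * ∑ k, (∫ ω, v ω k ∂μ) ^ 2 ≤ ∫ ω, v ω ⬝ᵥ (D ω *ᵥ v ω) ∂μ :=
  calc c * ∑ k, (∫ ω, v ω k ∂μ) ^ 2
      ≤ c * ∑ k, ∫ ω, v ω k ^ 2 ∂μ := by
        gcongr with k
        exact sq_integral_le_integral_sq (hv.eval k)
    _ = ∫ ω, c * ∑ k, v ω k ^ 2 ∂μ := by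
        rw [integral_const_mul, integral_finsetSum _ fun k _ => (hv.eval k).integrable_sq]
    _ ≤ ∫ ω, v ω ⬝ᵥ (D ω *ᵥ v ω) ∂μ :=
        integral_mono_ae
          ((integrable_finsetSum _ fun k _ => (hv.eval k).integrable_sq).const_mul c)
          (integrable_dotProduct_mulVec_s14 hD hv hv) (hell.mono fun ω h => h (v ω))

lemma integral_add_sum_mul_of_integral_eq_zero [IsProbabilityMeasure μ]
    {g : κ → Ω → ℝ} (hg : ∀ j, Integrable (g j) μ) (hg0 : ∀ j, ∫ ω, g j ω ∂μ = 0)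
    (a : ℝ) (x : κ → ℝ) :
    ∫ ω, a + ∑ j, x j * g j ω ∂μ = a := by
  have hint j := (hg j).const_mul (x j)
  rw [integral_add (integrable_const a) (integrable_finsetSum _ fun j _ => hint j),
    integral_finsetSum _ fun j _ => hint j]
  simp [integral_const_mul, hg0]

end

theorem stmt_14_general (n : ℕ) (Ω : Type*) [MeasurableSpace Ω]
    (μ : Measure Ω) [IsProbabilityMeasure μ]
    (D : Ω → Matrix (Fin n) (Fin n) ℝ)
    (hDmeas : ∀ i j, Measurable fun ω => D ω i j)
    (hDbdd : ∃ C, ∀ ω i j, |D ω i j| ≤ C)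
    (c : ℝ) (hc : 0 < c)
    (hDell : ∀ (ω : Ω) (η : Fin n → ℝ), c * ∑ k, η k ^ 2 ≤ η ⬝ᵥ ((D ω) *ᵥ η))
    (gradφ : Fin n → Ω → Fin n → ℝ)
    (hgL2 : ∀ j, MemLp (gradφ j) 2 μ)
    (hcell : ∀ i j, ∫ ω, gradφ i ω ⬝ᵥ ((D ω) *ᵥ (gradφ j ω + (Pi.single j 1 : Fin n → ℝ))) ∂μ = 0)
    -- mean-zero property of stochastic gradients:
    (hmean : ∀ j k, ∫ ω, gradφ j ω k ∂μ = 0)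
    (Dhom : Matrix (Fin n) (Fin n) ℝ)
    (hDhom : ∀ i j, Dhom i j
      = ∫ ω, (Pi.single i 1 : Fin n → ℝ) ⬝ᵥ ((D ω) *ᵥ (gradφ j ω + (Pi.single j 1 : Fin n → ℝ))) ∂μ) :
    ∀ ξ : Fin n → ℝ, ξ ≠ 0 →
      (ξ ⬝ᵥ (Dhom *ᵥ ξ)
        = ∫ ω, (ξ + fun k => ∑ j, ξ j * gradφ j ω k) ⬝ᵥ
            ((D ω) *ᵥ (ξ + fun k => ∑ j, ξ j * gradφ j ω k)) ∂μ) ∧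
      c * ∑ k, ξ k ^ 2 ≤ ξ ⬝ᵥ (Dhom *ᵥ ξ) ∧
      0 < c * ∑ k, ξ k ^ 2 := by
  intro ξ hξ
  obtain ⟨C, hC⟩ := hDbdd
  have hD i j : MemLp (fun ω => D ω i j) ⊤ μ :=
    memLp_top_of_bound (hDmeas i j).aestronglyMeasurable C (ae_of_all _ fun ω => hC ω i j)
  set w : Fin n → Ω → Fin n → ℝ := fun j ω => gradφ j ω + Pi.single j 1
  have hw j : MemLp (w j) 2 μ := (hgL2 j).add (memLp_const _)
  have hv ω : (ξ + fun k => ∑ j, ξ j * gradφ j ω k) = ∑ j, ξ j • w j ω := by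
    ext k
    simp [w, sum_add_distrib, Pi.single_apply, add_comm]
  have hwDw i j : ∫ ω, w i ω ⬝ᵥ (D ω *ᵥ w j ω) ∂μ = Dhom i j := by
    simp only [w, add_dotProduct]
    rw [integral_add (integrable_dotProduct_mulVec_s14 hD (hgL2 i) (hw j))
      (integrable_dotProduct_mulVec_s14 hD (memLp_const _) (hw j)), hcell, hDhom, zero_add]
  have henergy : ξ ⬝ᵥ (Dhom *ᵥ ξ) = ∫ ω, (ξ + fun k => ∑ j, ξ j * gradφ j ω k) ⬝ᵥ
      (D ω *ᵥ (ξ + fun k => ∑ j, ξ j * gradφ j ω k)) ∂μ := by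
    simp only [hv]
    rw [integral_sum_smul_dotProduct_mulVec_sum_smul hD hw hw, dotProduct_mulVec_self_eq_sum]
    simp only [hwDw]
  refine ⟨henergy, ?_, mul_pos hc (sum_sq_pos_of_ne_zero hξ)⟩
  have hvL2 : MemLp (fun ω => ξ + fun k => ∑ j, ξ j * gradφ j ω k) 2 μ := by
    rw [funext hv]
    exact memLp_finsetSum univ fun j _ => (hw j).const_smul (ξ j)
  have hvmean k : ∫ ω, (ξ + fun k => ∑ j, ξ j * gradφ j ω k) k ∂μ = ξ k :=
    integral_add_sum_mul_of_integral_eq_zero (fun j => ((hgL2 j).eval k).integrable one_le_two)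
      (hmean · k) _ _
  have := mul_sum_sq_integral_le_integral_dotProduct_mulVec hD hc.le (ae_of_all _ hDell) hvL2
  rwa [← henergy, sum_congr rfl fun k _ => by rw [hvmean k]] at this

/-- Positive definiteness of the homogenized matrix: ξ·D^hom ξ equals the cell energy and
is bounded below by c|ξ|² > 0 for ξ ≠ 0. -/
theorem stmt_14 (n : ℕ) (Ω : Type*) [MeasurableSpace Ω]
    (μ : Measure Ω) [IsProbabilityMeasure μ]
    (D : Ω → Matrix (Fin n) (Fin n) ℝ)
    (hDmeas : ∀ i j, Measurable fun ω => D ω i j)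
    (hDbdd : ∃ C, ∀ ω i j, |D ω i j| ≤ C)
    (hDsymm : ∀ ω, (D ω).IsSymm)
    (c : ℝ) (hc : 0 < c)
    (hDell : ∀ (ω : Ω) (η : Fin n → ℝ), c * ∑ k, η k ^ 2 ≤ η ⬝ᵥ ((D ω) *ᵥ η))
    (gradφ : Fin n → Ω → Fin n → ℝ)
    (hgmeas : ∀ j, Measurable (gradφ j))
    (hgL2 : ∀ j, MemLp (gradφ j) 2 μ)
    (hcell : ∀ i j, ∫ ω, gradφ i ω ⬝ᵥ ((D ω) *ᵥ (gradφ j ω + (Pi.single j 1 : Fin n → ℝ))) ∂μ = 0)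
    -- mean-zero property of stochastic gradients:
    (hmean : ∀ j k, ∫ ω, gradφ j ω k ∂μ = 0)
    (Dhom : Matrix (Fin n) (Fin n) ℝ)
    (hDhom : ∀ i j, Dhom i j
      = ∫ ω, (Pi.single i 1 : Fin n → ℝ) ⬝ᵥ ((D ω) *ᵥ (gradφ j ω + (Pi.single j 1 : Fin n → ℝ))) ∂μ) :
    ∀ ξ : Fin n → ℝ, ξ ≠ 0 →
      (ξ ⬝ᵥ (Dhom *ᵥ ξ)
        = ∫ ω, (ξ + fun k => ∑ j, ξ j * gradφ j ω k) ⬝ᵥ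
            ((D ω) *ᵥ (ξ + fun k => ∑ j, ξ j * gradφ j ω k)) ∂μ) ∧
      c * ∑ k, ξ k ^ 2 ≤ ξ ⬝ᵥ (Dhom *ᵥ ξ) ∧
      0 < c * ∑ k, ξ k ^ 2 :=
  stmt_14_general n Ω μ D hDmeas hDbdd c hc hDell gradφ hgL2 hcell hmean Dhom hDhom
end

section
/- If ψ ∈ C_b^1(Ω) with ψ = 0 on Γ := ∂A and φ ∈ C_b^1(Ω)^n, then ∫_A ψ div_ω φ dμ = −∫_A ∇_ω ψ · φ dμ (the boundary term in the stochastic Gauss theorem vanishes). -/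
/-!
Fix a coordinate direction `e`; then `t ↦ τ (t • e)` is a measure-preserving flow, and it suffices
to show `∫_A g' dμ = 0` for `g = ψ φᵢ` and its derivative `g'` along the flow. The difference
quotients `∫_A (g ∘ τ_{he} - g) / h` converge to `∫_A g'`, and by invariance of `μ` they equal
`∫ g (1_{τ_{-he}⁻¹ A} - 1_A) / h`. This integrand vanishes unless the orbit segment from `ω` to
`τ_{-he} ω` crosses the boundary of the realization, where `g = 0`, so it is bounded by `sup |g'|`.
Pointwise it tends to `0`: either `g ω = 0`, or `0` is an interior point of the realization
or of its complement along the orbit. Dominated convergence gives `∫_A g' = 0`.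
-/

open MeasureTheory Filter Topology Set Interval
open scoped BoundedContinuousFunction

theorem IsPreconnected.inter_frontier_nonempty {X : Type*} [TopologicalSpace X] {s t : Set X}
    (hs : IsPreconnected s) (hst : (s ∩ t).Nonempty) (hst' : (s \ t).Nonempty) :
    (s ∩ frontier t).Nonempty := by
  by_contra h
  have hfr : ∀ x ∈ s, x ∉ frontier t := fun x hx hx' ↦ h ⟨x, hx, hx'⟩
  have hint : ∀ x ∈ s, x ∈ t → x ∈ interior t := fun x hx hxt ↦ by
    by_contra hi; exact hfr x hx ⟨subset_closure hxt, hi⟩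
  have hext : ∀ x ∈ s, x ∉ t → x ∈ (closure t)ᶜ := fun x hx hxt hcl ↦
    hfr x hx ⟨hcl, fun hi ↦ hxt (interior_subset hi)⟩
  obtain ⟨x, -, hxi, hxc⟩ := hs _ _ isOpen_interior isClosed_closure.isOpen_compl
    (fun x hx ↦ (em (x ∈ t)).imp (hint x hx) (hext x hx))
    (hst.imp fun x hx ↦ ⟨hx.1, hint x hx.1 hx.2⟩) (hst'.imp fun x hx ↦ ⟨hx.1, hext x hx.1 hx.2⟩)
  exact hxc (interior_subset_closure hxi)

theorem eventually_mem_iff_of_notMem_frontier {X : Type*} [TopologicalSpace X] {s : Set X} {x : X}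
    (hx : x ∉ frontier s) : ∀ᶠ y in 𝓝 x, y ∈ s ↔ x ∈ s := by
  by_cases hxs : x ∈ s
  · have : x ∈ interior s := by
      by_contra hi; exact hx ⟨subset_closure hxs, hi⟩
    filter_upwards [mem_interior_iff_mem_nhds.1 this] with y hy using iff_of_true hy hxs
  · have : x ∈ interior sᶜ := by
      rw [interior_compl]
      exact fun hcl ↦ hx ⟨hcl, fun hi ↦ hxs (interior_subset hi)⟩
    filter_upwards [mem_interior_iff_mem_nhds.1 this] with y hy using iff_of_false hy hxs

namespace Flow

variable {Ω : Type*} [TopologicalSpace Ω] (ϕ : Flow ℝ Ω) {g g' : Ω → ℝ} {K : ℝ}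

theorem hasDerivAt_of_hasDerivAt_zero (hg : ∀ ω, HasDerivAt (fun t ↦ g (ϕ t ω)) (g' ω) 0)
    (ω : Ω) (t : ℝ) : HasDerivAt (fun s ↦ g (ϕ s ω)) (g' (ϕ t ω)) t := by
  have := HasDerivAt.comp_sub_const t t (by rw [sub_self]; exact hg (ϕ t ω))
  simp only [← map_add, sub_add_cancel] at this
  exact this

theorem abs_sub_le_of_hasDerivAt_zero (hg : ∀ ω, HasDerivAt (fun t ↦ g (ϕ t ω)) (g' ω) 0)
    (hK : ∀ ω, |g' ω| ≤ K) (ω : Ω) (s t : ℝ) : |g (ϕ s ω) - g (ϕ t ω)| ≤ K * |s - t| := by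
  simpa only [Real.norm_eq_abs] using Convex.norm_image_sub_le_of_norm_hasDerivWithin_le
    (fun x _ ↦ (ϕ.hasDerivAt_of_hasDerivAt_zero hg ω x).hasDerivWithinAt)
    (fun x _ ↦ (Real.norm_eq_abs _).trans_le (hK _)) convex_univ (mem_univ t) (mem_univ s)

variable {A : Set Ω}

theorem abs_le_mul_abs_of_xor (hg : ∀ ω, HasDerivAt (fun t ↦ g (ϕ t ω)) (g' ω) 0)
    (hK : ∀ ω, |g' ω| ≤ K) (hA : ∀ ω t, t ∈ frontier {s | ϕ s ω ∈ A} → g (ϕ t ω) = 0)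
    {ω : Ω} {h : ℝ} (hω : Xor (ϕ h ω ∈ A) (ω ∈ A)) : |g ω| ≤ K * |h| := by
  have hK₀ : 0 ≤ K := (abs_nonneg _).trans (hK ω)
  obtain ⟨s, hs, hsA⟩ : ([[0, h]] ∩ frontier {s | ϕ s ω ∈ A}).Nonempty := by
    rcases hω with ⟨hh, h0⟩ | ⟨h0, hh⟩ <;> rw [← ϕ.map_zero_apply ω] at h0
    · exact isPreconnected_uIcc.inter_frontier_nonempty ⟨h, right_mem_uIcc, hh⟩
        ⟨0, left_mem_uIcc, h0⟩
    · exact isPreconnected_uIcc.inter_frontier_nonempty ⟨0, left_mem_uIcc, h0⟩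
        ⟨h, right_mem_uIcc, hh⟩
  calc |g ω| = |g (ϕ 0 ω) - g (ϕ s ω)| := by rw [hA ω s hsA, sub_zero, ϕ.map_zero_apply]
    _ ≤ K * |0 - s| := ϕ.abs_sub_le_of_hasDerivAt_zero hg hK ω 0 s
    _ ≤ K * |h| := by
      simpa using mul_le_mul_of_nonneg_left (abs_sub_left_of_mem_uIcc hs) hK₀

theorem abs_indicator_sub_indicator_le (hg : ∀ ω, HasDerivAt (fun t ↦ g (ϕ t ω)) (g' ω) 0)
    (hK : ∀ ω, |g' ω| ≤ K) (hA : ∀ ω t, t ∈ frontier {s | ϕ s ω ∈ A} → g (ϕ t ω) = 0)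
    (h : ℝ) (ω : Ω) : |(ϕ h ⁻¹' A).indicator g ω - A.indicator g ω| ≤ K * |h| := by
  have hK₀ : 0 ≤ K * |h| := mul_nonneg ((abs_nonneg _).trans (hK ω)) (abs_nonneg h)
  by_cases h₁ : ϕ h ω ∈ A <;> by_cases h₂ : ω ∈ A <;>
    simp only [mem_preimage, h₁, h₂, not_false_eq_true, indicator_of_mem, indicator_of_notMem,
      sub_self, sub_zero, zero_sub, abs_zero, abs_neg, hK₀] <;>
    exact ϕ.abs_le_mul_abs_of_xor hg hK hA (by simp [Xor, h₁, h₂])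

variable [MeasurableSpace Ω] {μ : Measure Ω}

theorem setIntegral_sub_eq_integral_indicator_sub [BorelSpace Ω]
    (hmp : ∀ t, MeasurePreserving (ϕ t) μ μ) (hA : MeasurableSet A) (hg : Integrable g μ) (h : ℝ) :
    ∫ ω in A, (g (ϕ h ω) - g ω) ∂μ =
      ∫ ω, ((ϕ (-h) ⁻¹' A).indicator g ω - A.indicator g ω) ∂μ := by
  have hA' : MeasurableSet (ϕ (-h) ⁻¹' A) := hA.preimage (ϕ.continuous_toFun _).measurable
  have hgh : Integrable (fun ω ↦ g (ϕ h ω)) μ := (hmp h).integrable_comp_of_integrable hg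
  rw [integral_sub hgh.integrableOn hg.integrableOn,
    integral_sub (hg.indicator hA') (hg.indicator hA), integral_indicator hA',
    integral_indicator hA, ← ϕ.image_eq_preimage_symm,
    (hmp h).setIntegral_image_emb (ϕ.toHomeomorph h).measurableEmbedding]

variable [IsFiniteMeasure μ]

theorem tendsto_setIntegral_slope (hmp : ∀ t, MeasurePreserving (ϕ t) μ μ) (hg : Integrable g μ)
    (hg' : ∀ ω, HasDerivAt (fun t ↦ g (ϕ t ω)) (g' ω) 0) (hK : ∀ ω, |g' ω| ≤ K) :
    Tendsto (fun h ↦ ∫ ω in A, (g (ϕ h ω) - g ω) / h ∂μ) (𝓝[≠] 0) (𝓝 (∫ ω in A, g' ω ∂μ)) := by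
  refine tendsto_integral_filter_of_dominated_convergence (fun _ ↦ K) (.of_forall fun h ↦ ?_)
    (eventually_nhdsWithin_of_forall fun h hh ↦ .of_forall fun ω ↦ ?_) (integrable_const K)
    (.of_forall fun ω ↦ ?_)
  · exact (((hmp h).integrable_comp_of_integrable hg).sub hg).div_const h
      |>.aestronglyMeasurable.restrict
  · rw [Real.norm_eq_abs, abs_div, div_le_iff₀ (abs_pos.2 hh)]
    simpa [ϕ.map_zero_apply] using ϕ.abs_sub_le_of_hasDerivAt_zero hg' hK ω h 0
  · simpa [ϕ.map_zero_apply, div_eq_inv_mul] using (hg' ω).tendsto_slope_zero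

theorem tendsto_integral_indicator_sub_div [BorelSpace Ω] (hA : MeasurableSet A)
    (hg : AEMeasurable g μ)
    (hg' : ∀ ω, HasDerivAt (fun t ↦ g (ϕ t ω)) (g' ω) 0) (hK : ∀ ω, |g' ω| ≤ K)
    (hAg : ∀ ω t, t ∈ frontier {s | ϕ s ω ∈ A} → g (ϕ t ω) = 0) :
    Tendsto (fun h ↦ ∫ ω, ((ϕ (-h) ⁻¹' A).indicator g ω - A.indicator g ω) / h ∂μ)
      (𝓝[≠] 0) (𝓝 0) := by
  suffices Tendsto (fun h ↦ ∫ ω, ((ϕ (-h) ⁻¹' A).indicator g ω - A.indicator g ω) / h ∂μ)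
      (𝓝[≠] 0) (𝓝 (∫ _, 0 ∂μ)) by simpa using this
  refine tendsto_integral_filter_of_dominated_convergence (fun _ ↦ K) (.of_forall fun h ↦ ?_)
    (eventually_nhdsWithin_of_forall fun h hh ↦ .of_forall fun ω ↦ ?_) (integrable_const K)
    (.of_forall fun ω ↦ ?_)
  · exact ((hg.indicator (hA.preimage (ϕ.continuous_toFun _).measurable)).sub
      (hg.indicator hA)).div_const h |>.aestronglyMeasurable
  · rw [Real.norm_eq_abs, abs_div, div_le_iff₀ (abs_pos.2 hh)]
    simpa using ϕ.abs_indicator_sub_indicator_le hg' hK hAg (-h) ω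
  by_cases hω : (0 : ℝ) ∈ frontier {s | ϕ s ω ∈ A}
  · have hgω : ∀ s : Set Ω, s.indicator g ω = 0 := fun s ↦
      indicator_apply_eq_zero.2 fun _ ↦ by simpa [ϕ.map_zero_apply] using hAg ω 0 hω
    simp only [hgω, sub_zero, zero_div]
    exact tendsto_const_nhds
  · have hev := (continuous_neg.tendsto' (0 : ℝ) 0 neg_zero).eventually
      (eventually_mem_iff_of_notMem_frontier hω)
    refine tendsto_const_nhds.congr' (eventually_nhdsWithin_of_eventually_nhds ?_)
    filter_upwards [hev] with h hh
    change ϕ (-h) ω ∈ A ↔ ϕ 0 ω ∈ A at hh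
    rw [ϕ.map_zero_apply] at hh
    have : (ϕ (-h) ⁻¹' A).indicator g ω = A.indicator g ω := by
      classical
      exact if_congr hh rfl rfl
    rw [this, sub_self, zero_div]

theorem setIntegral_deriv_eq_zero [BorelSpace Ω] (hmp : ∀ t, MeasurePreserving (ϕ t) μ μ)
    (hA : MeasurableSet A) (hg : Integrable g μ)
    (hg' : ∀ ω, HasDerivAt (fun t ↦ g (ϕ t ω)) (g' ω) 0) (hK : ∀ ω, |g' ω| ≤ K)
    (hAg : ∀ ω t, t ∈ frontier {s | ϕ s ω ∈ A} → g (ϕ t ω) = 0) :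
    ∫ ω in A, g' ω ∂μ = 0 := by
  refine tendsto_nhds_unique ((ϕ.tendsto_setIntegral_slope hmp hg hg' hK).congr fun h ↦ ?_)
    (ϕ.tendsto_integral_indicator_sub_div hA hg.aemeasurable hg' hK hAg)
  rw [integral_div, integral_div, ϕ.setIntegral_sub_eq_integral_indicator_sub hmp hA hg]

theorem setIntegral_mul_deriv_eq_neg [BorelSpace Ω] (hmp : ∀ t, MeasurePreserving (ϕ t) μ μ)
    (hA : MeasurableSet A) {u v u' v' : Ω →ᵇ ℝ}
    (hu : ∀ ω, HasDerivAt (fun t ↦ u (ϕ t ω)) (u' ω) 0)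
    (hv : ∀ ω, HasDerivAt (fun t ↦ v (ϕ t ω)) (v' ω) 0)
    (hAu : ∀ ω t, t ∈ frontier {s | ϕ s ω ∈ A} → u (ϕ t ω) = 0) :
    ∫ ω in A, u ω * v' ω ∂μ = -∫ ω in A, u' ω * v ω ∂μ := by
  have h := ϕ.setIntegral_deriv_eq_zero hmp hA ((u * v).integrable μ)
    (g' := fun ω ↦ u' ω * v ω + u ω * v' ω)
    (fun ω ↦ by simpa [ϕ.map_zero_apply] using (hu ω).fun_mul (hv ω))
    (fun ω ↦ (u' * v + u * v').norm_coe_le_norm ω) (fun ω t ht ↦ by simp [hAu ω t ht])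
  rw [integral_add (f := fun ω ↦ u' ω * v ω) (g := fun ω ↦ u ω * v' ω)
    ((u' * v).integrable _) ((u * v').integrable _)] at h
  exact eq_neg_of_add_eq_zero_right h

end Flow

def lineFlow {V Ω : Type*} [AddCommGroup V] [Module ℝ V] [TopologicalSpace V] [ContinuousSMul ℝ V]
    [TopologicalSpace Ω] (τ : V → Ω → Ω) (hcont : Continuous fun p : V × Ω ↦ τ p.1 p.2)
    (hadd : ∀ x y, τ x ∘ τ y = τ (x + y)) (hzero : τ 0 = id) (v : V) : Flow ℝ Ω where
  toFun t := τ (t • v)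
  cont' := hcont.comp ((continuous_fst.smul continuous_const).prodMk continuous_snd)
  map_add' s t ω := by rw [add_smul, ← hadd]; rfl
  map_zero' ω := by rw [zero_smul, hzero]; rfl

theorem stmt_18_general (n : ℕ) (Ω : Type*) [MetricSpace Ω] [MeasurableSpace Ω] [BorelSpace Ω]
    (μ : Measure Ω) [IsProbabilityMeasure μ]
    (τ : (Fin n → ℝ) → Ω → Ω)
    (hgrp : ∀ x y, τ x ∘ τ y = τ (x + y)) (hid : τ 0 = id)
    (hcont : Continuous fun p : (Fin n → ℝ) × Ω => τ p.1 p.2)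
    (hmp : ∀ x, MeasurePreserving (τ x) μ μ)
    -- the random closed set structure : realizations A(ω) with boundary Γ(ω)
    (Aset : Ω → Set (Fin n → ℝ))
    (A : Set Ω) (hA : MeasurableSet A)
    (hAstat : ∀ (ω : Ω) (x : Fin n → ℝ), x ∈ Aset ω ↔ τ x ω ∈ A)
    (Γ : Set Ω)
    (hΓstat : ∀ (ω : Ω) (x : Fin n → ℝ), x ∈ frontier (Aset ω) ↔ τ x ω ∈ Γ)
    (ψ : Ω → ℝ) (Dψ : Ω → Fin n → ℝ)
    (hψc : Continuous ψ) (hψb : ∃ C, ∀ ω, |ψ ω| ≤ C)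
    (hψd : ∀ ω i, HasDerivAt (fun h : ℝ => ψ (τ (h • (Pi.single i 1 : Fin n → ℝ)) ω)) (Dψ ω i) 0)
    (hDψc : Continuous Dψ) (hDψb : ∃ C, ∀ ω i, |Dψ ω i| ≤ C)
    (hψΓ : ∀ ω ∈ Γ, ψ ω = 0)
    (φ : Ω → Fin n → ℝ) (Dφ : Ω → Fin n → Fin n → ℝ)
    (hφc : Continuous φ) (hφb : ∃ C, ∀ ω i, |φ ω i| ≤ C)
    (hφd : ∀ ω i j, HasDerivAt (fun h : ℝ => φ (τ (h • (Pi.single i 1 : Fin n → ℝ)) ω) j) (Dφ ω i j) 0)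
    (hDφc : Continuous Dφ) (hDφb : ∃ C, ∀ ω i j, |Dφ ω i j| ≤ C) :
    ∫ ω in A, ψ ω * ∑ i, Dφ ω i i ∂μ = - ∫ ω in A, ∑ i, Dψ ω i * φ ω i ∂μ := by
  obtain ⟨C₁, hC₁⟩ := hψb
  obtain ⟨C₂, hC₂⟩ := hDψb
  obtain ⟨C₃, hC₃⟩ := hφb
  obtain ⟨C₄, hC₄⟩ := hDφb
  let Ψ : Ω →ᵇ ℝ := .ofNormedAddCommGroup ψ hψc C₁ hC₁
  let DΨ (i : Fin n) : Ω →ᵇ ℝ :=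
    .ofNormedAddCommGroup (Dψ · i) ((continuous_apply i).comp hDψc) C₂ (hC₂ · i)
  let Φ (i : Fin n) : Ω →ᵇ ℝ :=
    .ofNormedAddCommGroup (φ · i) ((continuous_apply i).comp hφc) C₃ (hC₃ · i)
  let DΦ (i : Fin n) : Ω →ᵇ ℝ := .ofNormedAddCommGroup (Dφ · i i)
    ((continuous_apply i).comp ((continuous_apply i).comp hDφc)) C₄ (hC₄ · i i)
  have hΓ_frontier (i : Fin n) (ω : Ω) (t : ℝ)
      (ht : t ∈ frontier {s | lineFlow τ hcont hgrp hid (Pi.single i 1) s ω ∈ A}) :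
      τ (t • Pi.single i 1) ω ∈ Γ := by
    have hset : {s | lineFlow τ hcont hgrp hid (Pi.single i 1) s ω ∈ A} =
        (· • Pi.single i 1) ⁻¹' Aset ω := ext fun s ↦ (hAstat ω _).symm
    rw [hset] at ht
    exact (hΓstat ω _).1 ((continuous_id.smul continuous_const).frontier_preimage_subset _ ht)
  have hibp (i : Fin n) : ∫ ω in A, ψ ω * Dφ ω i i ∂μ = -∫ ω in A, Dψ ω i * φ ω i ∂μ :=
    (lineFlow τ hcont hgrp hid (Pi.single i 1)).setIntegral_mul_deriv_eq_neg (fun t ↦ hmp _) hA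
      (u := Ψ) (v := Φ i) (u' := DΨ i) (v' := DΦ i) (fun ω ↦ hψd ω i) (fun ω ↦ hφd ω i i)
      (fun ω t ht ↦ hψΓ _ (hΓ_frontier i ω t ht))
  simp_rw [Finset.mul_sum]
  rw [integral_finsetSum (f := fun i ω ↦ ψ ω * Dφ ω i i) _ fun i _ ↦ (Ψ * DΦ i).integrable _,
    integral_finsetSum (f := fun i ω ↦ Dψ ω i * φ ω i) _ fun i _ ↦ (DΨ i * Φ i).integrable _,
    ← Finset.sum_neg_distrib]
  exact Finset.sum_congr rfl fun i _ ↦ hibp i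

/-- Stochastic Gauss theorem on A: if ψ ∈ C_b¹(Ω) vanishes on Γ = ∂A, then
∫_A ψ div_ω φ dμ = −∫_A ∇_ω ψ · φ dμ (the boundary term vanishes). -/
theorem stmt_18 (n : ℕ) (Ω : Type*) [MetricSpace Ω] [MeasurableSpace Ω] [BorelSpace Ω]
    (μ : Measure Ω) [IsProbabilityMeasure μ]
    (τ : (Fin n → ℝ) → Ω → Ω)
    (hgrp : ∀ x y, τ x ∘ τ y = τ (x + y)) (hid : τ 0 = id)
    (hcont : Continuous fun p : (Fin n → ℝ) × Ω => τ p.1 p.2)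
    (hmp : ∀ x, MeasurePreserving (τ x) μ μ)
    (herg : ∀ g : Ω → ℝ, Measurable g →
      (∀ x, ∀ᵐ ω ∂μ, g (τ x ω) = g ω) → ∃ c : ℝ, ∀ᵐ ω ∂μ, g ω = c)
    -- the random closed set structure : realizations A(ω) with boundary Γ(ω)
    (Aset : Ω → Set (Fin n → ℝ)) (hclosed : ∀ ω, IsClosed (Aset ω))
    (A : Set Ω) (hA : MeasurableSet A)
    (hAstat : ∀ (ω : Ω) (x : Fin n → ℝ), x ∈ Aset ω ↔ τ x ω ∈ A)
    (Γ : Set Ω) (hΓ : MeasurableSet Γ)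
    (hΓstat : ∀ (ω : Ω) (x : Fin n → ℝ), x ∈ frontier (Aset ω) ↔ τ x ω ∈ Γ)
    (ψ : Ω → ℝ) (Dψ : Ω → Fin n → ℝ)
    (hψc : Continuous ψ) (hψb : ∃ C, ∀ ω, |ψ ω| ≤ C)
    (hψd : ∀ ω i, HasDerivAt (fun h : ℝ => ψ (τ (h • (Pi.single i 1 : Fin n → ℝ)) ω)) (Dψ ω i) 0)
    (hDψc : Continuous Dψ) (hDψb : ∃ C, ∀ ω i, |Dψ ω i| ≤ C)
    (hψΓ : ∀ ω ∈ Γ, ψ ω = 0)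
    (φ : Ω → Fin n → ℝ) (Dφ : Ω → Fin n → Fin n → ℝ)
    (hφc : Continuous φ) (hφb : ∃ C, ∀ ω i, |φ ω i| ≤ C)
    (hφd : ∀ ω i j, HasDerivAt (fun h : ℝ => φ (τ (h • (Pi.single i 1 : Fin n → ℝ)) ω) j) (Dφ ω i j) 0)
    (hDφc : Continuous Dφ) (hDφb : ∃ C, ∀ ω i j, |Dφ ω i j| ≤ C) :
    ∫ ω in A, ψ ω * ∑ i, Dφ ω i i ∂μ = - ∫ ω in A, ∑ i, Dψ ω i * φ ω i ∂μ :=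
  stmt_18_general n Ω μ τ hgrp hid hcont hmp Aset A hA hAstat Γ hΓstat ψ Dψ hψc hψb hψd hDψc hDψb
    hψΓ φ Dφ hφc hφb hφd hDφc hDφb
end
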